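/- Let s₁ = b₁e₁ + b₂e₂ and s₂ = b₃e₁ + b₄e₂ (e₁ = (1,0), e₂ = (1/2,√3/2)), and let s₁', s₂' and s₁'', s₂'' denote their simultaneous rotations by 2π/3 and 4π/3 respectively. Then for any p, q ∈ ℝ, the cross-term coefficient of pq in (s₁·(p,q))(s₂·(p,q)) + (s₁'·(p,q))(s₂'·(p,q)) + (s₁''·(p,q))(s₂''·(p,q)) vanishes, so the sum has the form μ₁p² + μ₂q² with μ₁, μ₂ independent of p, q. -/

import Mathlib

/-- Rotation of the plane by the angle θ about the origin. -/
noncomputable def rot (θ : ℝ) (v : ℝ × ℝ) : ℝ × ℝ :=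
  (Real.cos θ * v.1 - Real.sin θ * v.2, Real.sin θ * v.1 + Real.cos θ * v.2)

noncomputable def e₁ : ℝ × ℝ := ((1 : ℝ), (0 : ℝ))
noncomputable def e₂ : ℝ × ℝ := ((1/2 : ℝ), Real.sqrt 3 / 2)

/-- dot product with (p,q) -/
def dotPQ (v : ℝ × ℝ) (p q : ℝ) : ℝ := v.1 * p + v.2 * q

/-!
For a fixed direction `(p, q)`, the product `(R_θ u · (p, q)) (R_θ v · (p, q))` is a
trigonometric polynomial of degree two in `θ` with no first harmonic: its mean is
`½ ⟨u, v⟩ (p² + q²)`, and the rest is a combination of `cos 2θ` and `sin 2θ`. Doubling the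
angles `0, 2π/3, 4π/3` permutes them modulo `2π`, and `cos`, `sin` sum to zero over them, so
the second harmonic cancels. The sum of the three products is therefore
`(3/2) ⟨s₁, s₂⟩ (p² + q²)`, and `μ₁ = μ₂ = (3/2) ⟨s₁, s₂⟩`.
-/

open Real

theorem rot_zero (v : ℝ × ℝ) : rot 0 v = v := by
  simp [rot]

theorem cos_two_pi_div_three : cos (2 * π / 3) = -(1 / 2) := by
  rw [show 2 * π / 3 = π - π / 3 by ring, cos_pi_sub, cos_pi_div_three]

theorem sin_two_pi_div_three : sin (2 * π / 3) = √3 / 2 := by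
  rw [show 2 * π / 3 = π - π / 3 by ring, sin_pi_sub, sin_pi_div_three]

theorem cos_four_pi_div_three : cos (4 * π / 3) = -(1 / 2) := by
  rw [show 4 * π / 3 = π / 3 + π by ring, cos_add_pi, cos_pi_div_three]

theorem sin_four_pi_div_three : sin (4 * π / 3) = -(√3 / 2) := by
  rw [show 4 * π / 3 = π / 3 + π by ring, sin_add_pi, sin_pi_div_three]

theorem dotPQ_rot_mul_dotPQ_rot (θ : ℝ) (u v : ℝ × ℝ) (p q : ℝ) :
    dotPQ (rot θ u) p q * dotPQ (rot θ v) p q =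
      ((u.1 * v.1 + u.2 * v.2) * (p ^ 2 + q ^ 2)
        + cos (2 * θ) * ((u.1 * v.1 - u.2 * v.2) * (p ^ 2 - q ^ 2)
            + (u.1 * v.2 + u.2 * v.1) * (2 * p * q))
        + sin (2 * θ) * ((u.1 * v.1 - u.2 * v.2) * (2 * p * q)
            - (u.1 * v.2 + u.2 * v.1) * (p ^ 2 - q ^ 2))) / 2 := by
  rw [cos_two_mul', sin_two_mul]
  simp only [dotPQ, rot]
  linear_combination (u.1 * v.1 + u.2 * v.2) * (p ^ 2 + q ^ 2) / 2 * sin_sq_add_cos_sq θ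

theorem sum_dotPQ_mul_dotPQ_third_turns (u v : ℝ × ℝ) (p q : ℝ) :
    dotPQ u p q * dotPQ v p q
      + dotPQ (rot (2 * π / 3) u) p q * dotPQ (rot (2 * π / 3) v) p q
      + dotPQ (rot (4 * π / 3) u) p q * dotPQ (rot (4 * π / 3) v) p q
      = 3 / 2 * (u.1 * v.1 + u.2 * v.2) * (p ^ 2 + q ^ 2) := by
  have hid := dotPQ_rot_mul_dotPQ_rot 0 u v p q
  simp only [rot_zero, mul_zero, cos_zero, sin_zero] at hid
  rw [hid, dotPQ_rot_mul_dotPQ_rot, dotPQ_rot_mul_dotPQ_rot,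
    show 2 * (2 * π / 3) = 4 * π / 3 by ring,
    show 2 * (4 * π / 3) = 2 * π / 3 + 2 * π by ring, cos_add_two_pi, sin_add_two_pi,
    cos_two_pi_div_three, sin_two_pi_div_three, cos_four_pi_div_three, sin_four_pi_div_three]
  ring

theorem stmt_8 (b₁ b₂ b₃ b₄ : ℝ) :
    ∃ mu₁ mu₂ : ℝ, ∀ p q : ℝ,
      dotPQ (b₁ • e₁ + b₂ • e₂) p q * dotPQ (b₃ • e₁ + b₄ • e₂) p q +
      dotPQ (rot (2 * Real.pi / 3) (b₁ • e₁ + b₂ • e₂)) p q *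
        dotPQ (rot (2 * Real.pi / 3) (b₃ • e₁ + b₄ • e₂)) p q +
      dotPQ (rot (4 * Real.pi / 3) (b₁ • e₁ + b₂ • e₂)) p q *
        dotPQ (rot (4 * Real.pi / 3) (b₃ • e₁ + b₄ • e₂)) p q
      = mu₁ * p ^ 2 + mu₂ * q ^ 2 := by
  set s₁ := b₁ • e₁ + b₂ • e₂
  set s₂ := b₃ • e₁ + b₄ • e₂
  set μ := 3 / 2 * (s₁.1 * s₂.1 + s₁.2 * s₂.2)
  refine ⟨μ, μ, fun p q => ?_⟩
  rw [sum_dotPQ_mul_dotPQ_third_turns]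
  ring
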